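/- Let K⟨X⟩ have a weight ℕ-grading, ≺_gr an ℕ-graded monomial ordering, 𝒢 a finite Gröbner basis of I = ⟨𝒢⟩ with respect to ≺_gr, A = K⟨X⟩/I with the filtration F_p A = (F_p K⟨X⟩ + I)/I induced from the grading filtration of K⟨X⟩. Then the associated graded algebra G(A) = ⊕_p F_pA/F_{p-1}A is isomorphic as an ℕ-graded K-algebra to K⟨X⟩/⟨LH(𝒢)⟩, where LH(𝒢) is the set of leading homogeneous components of elements of 𝒢. -/

import Mathlib

open scoped Classical



/-- Words in the letters `X_1, …, X_n`: the free monoid on `Fin n`. -/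
abbrev Word (n : ℕ) := FreeMonoid (Fin n)

/-- The free associative `K`-algebra `K⟨X_1,…,X_n⟩`, realised as the monoid algebra of the
free monoid on `Fin n`. -/
abbrev FreeAlg (K : Type) [Field K] (n : ℕ) := MonoidAlgebra K (Word n)

/-- The word `v` divides the word `u` if `u = w * v * s` for some words `w, s`. -/
def WDvd {n : ℕ} (v u : Word n) : Prop := ∃ w s : Word n, u = w * v * s

/-- The monomial of `K⟨X⟩` corresponding to a word. -/
noncomputable def mono {K : Type} [Field K] {n : ℕ} (w : Word n) : FreeAlg K n :=
  MonoidAlgebra.single w 1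

/-- The two-sided ideal of `K⟨X⟩` generated by a set of words (a monomial ideal). -/
noncomputable def monIdeal (K : Type) [Field K] {n : ℕ} (Ω : Set (Word n)) :
    TwoSidedIdeal (FreeAlg K n) :=
  TwoSidedIdeal.span (mono '' Ω)

/-- A ring is semiprime if `a R a = 0` implies `a = 0`. -/
def IsSemiprimeRing (R : Type*) [Ring R] : Prop :=
  ∀ a : R, (∀ r : R, a * r * a = 0) → a = 0

/-- A ring is semiprimitive (Jacobson semisimple) if its Jacobson radical is zero. -/
def IsSemiprimitiveRing (R : Type*) [Ring R] : Prop :=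
  (⊥ : TwoSidedIdeal R).jacobson = ⊥

/-- A monomial ordering on the words: a multiplication-compatible well-ordering. -/
structure MonOrder (n : ℕ) where
  /-- the strict order relation -/
  lt : Word n → Word n → Prop
  trichotomous : ∀ u v : Word n, lt u v ∨ u = v ∨ lt v u
  trans : ∀ {u v w : Word n}, lt u v → lt v w → lt u w
  wf : WellFounded lt
  mul_compat : ∀ u v w s : Word n, lt u v → lt (w * u * s) (w * v * s)
  one_lt : ∀ u w s : Word n, w * u * s ≠ u → lt u (w * u * s)

/-- The leading monomial (word) of a nonzero element of `K⟨X⟩` with respect to a monomial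
ordering: the `≺`-largest word in its support (and `1` by convention for `0`). -/
noncomputable def LM {K : Type} [Field K] {n : ℕ} (o : MonOrder n) (f : FreeAlg K n) :
    Word n :=
  if h : ∃ w ∈ f.coeff.support, ∀ v ∈ f.coeff.support, v ≠ w → o.lt v w then h.choose else 1

/-- The weight degree of a word, where the letter `i` has weight `wt i`. -/
def wdeg {n : ℕ} (wt : Fin n → ℕ) (u : Word n) : ℕ :=
  (FreeMonoid.toList u |>.map wt).sum

/-- `f` is homogeneous of degree `p` with respect to the weight grading. -/
def IsHomogeneous {K : Type} [Field K] {n : ℕ} (wt : Fin n → ℕ) (f : FreeAlg K n)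
    (p : ℕ) : Prop :=
  ∀ w ∈ f.coeff.support, wdeg wt w = p

/-- The (highest-degree) leading homogeneous component of `f` with respect to the weight
grading. -/
noncomputable def LH {K : Type} [Field K] {n : ℕ} (wt : Fin n → ℕ) (f : FreeAlg K n) :
    FreeAlg K n :=
  MonoidAlgebra.ofCoeff (Finsupp.filter (fun w => wdeg wt w = f.coeff.support.sup (wdeg wt)) f.coeff)

/-- `𝒢` is a Gröbner basis of the two-sided ideal `I` w.r.t. the monomial ordering `o`:
`𝒢 ⊆ I ∖ {0}` and the leading monomials of `I` and of `𝒢` generate the same monomial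
ideal. -/
def IsGrobnerBasis {K : Type} [Field K] {n : ℕ} (o : MonOrder n)
    (𝒢 : Set (FreeAlg K n)) (I : TwoSidedIdeal (FreeAlg K n)) : Prop :=
  𝒢 ⊆ {f | f ∈ I ∧ f ≠ 0} ∧
    monIdeal K (LM o '' {f : FreeAlg K n | f ∈ I ∧ f ≠ 0}) = monIdeal K (LM o '' 𝒢)

/-- The natural `K`-algebra structure on the quotient of a `K`-algebra by a ring
congruence. -/
noncomputable instance ringConQuotientAlgebra {K A : Type*} [CommSemiring K] [Semiring A]
    [Algebra K A] (c : RingCon A) : Algebra K c.Quotient :=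
  { algebraMap := (RingCon.mk' c).comp (algebraMap K A)
    smul := (· • ·)
    commutes' := fun k => Quotient.ind' fun a =>
      congrArg (RingCon.toQuotient (c := c)) (Algebra.commutes k a)
    smul_def' := fun k => Quotient.ind' fun a =>
      congrArg (RingCon.toQuotient (c := c)) (Algebra.smul_def k a) }

/-- The quotient map as a `K`-algebra homomorphism. -/
noncomputable def quotAlgHom {K A : Type*} [CommSemiring K] [Semiring A] [Algebra K A]
    (c : RingCon A) : A →ₐ[K] c.Quotient :=
  { RingCon.mk' c with commutes' := fun _ => rfl }

/-- Data exhibiting the `K`-algebra `B` as the associated graded algebra `G(A)` of the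
`ℕ`-filtered algebra `A` with filtration `F`. -/
structure AssocGradedData (K A B : Type) [Field K] [Ring A] [Algebra K A]
    [Ring B] [Algebra K B] (F : ℕ → Submodule K A) : Type where
  mono : Monotone F
  one_mem : (1 : A) ∈ F 0
  mul_mem : ∀ p q : ℕ, ∀ x ∈ F p, ∀ y ∈ F q, x * y ∈ F (p + q)
  exhaustive : ∀ a : A, ∃ p : ℕ, a ∈ F p
  gr : ∀ p : ℕ, F p →ₗ[K] B
  gr_ker_zero : ∀ x : F 0, gr 0 x = 0 ↔ (x : A) = 0
  gr_ker_succ : ∀ (p : ℕ) (x : F (p + 1)), gr (p + 1) x = 0 ↔ (x : A) ∈ F p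
  internal : DirectSum.IsInternal (fun p : ℕ => LinearMap.range (gr p))
  gr_mul : ∀ (p q : ℕ) (x : F p) (y : F q),
    gr p x * gr q y = gr (p + q) ⟨(x : A) * (y : A), mul_mem p q x x.2 y y.2⟩
  gr_one : gr 0 ⟨1, one_mem⟩ = 1

/-!
Sending a word `w` to the symbol of `w + I` in `F_{|w|}A / F_{|w|-1}A` defines a surjective graded
algebra map `K⟨X⟩ → G(A)`. It maps the degree-`p` component of any `f ∈ F_p K⟨X⟩` to the symbol
of `f + I` in degree `p`, so its kernel is spanned by the degree-`p` components of the elements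
of `I ∩ F_p K⟨X⟩`, among them `LH(𝒢)`. Because the monomial order refines the grading, reducing
`g ∈ I` by `c • w g₀ s`, where `g₀ ∈ 𝒢` and `w LM(g₀) s = LM(g)`, lowers the leading monomial and
changes the top component by `c • w LH(g₀) s`; well-founded induction on the leading monomial
then puts all these components in `⟨LH(𝒢)⟩`.
-/

variable {K : Type} [Field K] {n : ℕ}

lemma quotAlgHom_eq_zero_iff {R : Type*} [Ring R] [Algebra K R] (I : TwoSidedIdeal R) (a : R) :
    quotAlgHom (K := K) I.ringCon a = 0 ↔ a ∈ I :=
  (RingCon.eq _).trans (I.rel_iff a 0 |>.trans (by rw [sub_zero]))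

noncomputable def quotientAlgEquivOfSurjective {A B : Type*} [Ring A] [Algebra K A] [Ring B]
    [Algebra K B] (φ : A →ₐ[K] B) (hφ : Function.Surjective φ) (J : TwoSidedIdeal A)
    (hJ : ∀ a, φ a = 0 ↔ a ∈ J) : J.ringCon.Quotient ≃ₐ[K] B :=
  AlgEquiv.ofRingEquiv
    (f := (RingCon.congr (RingEquiv.refl A) (RingCon.ext fun a b => by
        rw [RingCon.comap_rel, RingCon.ker_apply, J.rel_iff, ← hJ, map_sub, sub_eq_zero]
        rfl)).trans
      (RingCon.quotientKerEquivOfSurjective (φ : A →+* B) hφ))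
    φ.commutes

lemma quotientAlgEquivOfSurjective_quotAlgHom {A B : Type*} [Ring A] [Algebra K A] [Ring B]
    [Algebra K B] (φ : A →ₐ[K] B) (hφ : Function.Surjective φ) (J : TwoSidedIdeal A)
    (hJ : ∀ a, φ a = 0 ↔ a ∈ J) (a : A) :
    quotientAlgEquivOfSurjective φ hφ J hJ (quotAlgHom (K := K) J.ringCon a) = φ a :=
  rfl

lemma wdeg_mul (wt : Fin n → ℕ) (u v : Word n) : wdeg wt (u * v) = wdeg wt u + wdeg wt v := by
  simp [wdeg]

lemma mono_mul (u v : Word n) : (mono (u * v) : FreeAlg K n) = mono u * mono v := by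
  simp [mono]

lemma mem_span_mono_iff {S : Set (Word n)} {f : FreeAlg K n} :
    f ∈ Submodule.span K (mono '' S) ↔ ↑f.coeff.support ⊆ S := by
  change f ∈ Submodule.span K ((MonoidAlgebra.single · 1) '' S) ↔ _
  rw [← MonoidAlgebra.supported_eq_span_single, MonoidAlgebra.mem_supported]

lemma WDvd.mul_left {v u : Word n} (h : WDvd v u) (a : Word n) : WDvd v (a * u) := by
  obtain ⟨w, s, rfl⟩ := h
  exact ⟨a * w, s, by simp [mul_assoc]⟩

lemma WDvd.mul_right {v u : Word n} (h : WDvd v u) (b : Word n) : WDvd v (u * b) := by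
  obtain ⟨w, s, rfl⟩ := h
  exact ⟨w, s * b, by simp [mul_assoc]⟩

lemma exists_wdvd_of_mono_mem_monIdeal {Ω : Set (Word n)} {u : Word n}
    (h : (mono u : FreeAlg K n) ∈ monIdeal K Ω) : ∃ ω ∈ Ω, WDvd ω u := by
  -- the words divisible by a word of `Ω` span a two-sided ideal, which contains `monIdeal K Ω`
  let S : Set (Word n) := {v | ∃ ω ∈ Ω, WDvd ω v}
  let M := MonoidAlgebra.supported K K S
  have mul_mem {x y : FreeAlg K n} (h : x ∈ M ∨ y ∈ M) : x * y ∈ M := by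
    refine MonoidAlgebra.mem_supported.mpr fun v hv => ?_
    obtain ⟨a, ha, b, hb, rfl⟩ :=
      Finset.mem_mul.mp (MonoidAlgebra.support_coeff_mul_subset x y hv)
    rcases h with hx | hy
    · obtain ⟨ω, hω, hdvd⟩ := hx ha
      exact ⟨ω, hω, hdvd.mul_right b⟩
    · obtain ⟨ω, hω, hdvd⟩ := hy hb
      exact ⟨ω, hω, hdvd.mul_left a⟩
  let M' : TwoSidedIdeal (FreeAlg K n) := .mk' M M.zero_mem M.add_mem M.neg_mem
    (fun hy => mul_mem (.inr hy)) (fun hx => mul_mem (.inl hx))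
  have hle : monIdeal K Ω ≤ M' := by
    refine TwoSidedIdeal.span_le.mpr ?_
    rintro _ ⟨ω, hω, rfl⟩
    refine (TwoSidedIdeal.mem_mk' ..).mpr (MonoidAlgebra.mem_supported.mpr ?_)
    simpa [mono, MonoidAlgebra.coeff_single, S] using ⟨ω, hω, 1, 1, by simp⟩
  have hu : mono u ∈ M := (TwoSidedIdeal.mem_mk' ..).mp (hle h)
  exact MonoidAlgebra.mem_supported.mp hu (by simp [mono, MonoidAlgebra.coeff_single])

section LeadingMonomial

instance MonOrder.isStrictTotalOrder (o : MonOrder n) : IsStrictTotalOrder (Word n) o.lt where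
  trichotomous u v h₁ h₂ := ((o.trichotomous u v).resolve_left h₁).resolve_right h₂
  irrefl _ h := o.wf.asymmetric _ _ h h
  trans _ _ _ := o.trans

lemma MonOrder.exists_greatest (o : MonOrder n) {s : Finset (Word n)} (hs : s.Nonempty) :
    ∃ w ∈ s, ∀ v ∈ s, v ≠ w → o.lt v w := by
  let := linearOrderOfSTO o.lt
  exact ⟨s.max' hs, s.max'_mem hs, fun v hv hne => lt_of_le_of_ne (s.le_max' v hv) hne⟩

variable {o : MonOrder n}

lemma LM_spec {f : FreeAlg K n} (hf : f ≠ 0) :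
    LM o f ∈ f.coeff.support ∧ ∀ v ∈ f.coeff.support, v ≠ LM o f → o.lt v (LM o f) := by
  have h := o.exists_greatest (s := f.coeff.support) (by simpa using hf)
  rw [LM, dif_pos h]
  exact h.choose_spec

lemma LM_mem_support {f : FreeAlg K n} (hf : f ≠ 0) : LM o f ∈ f.coeff.support :=
  (LM_spec hf).1

lemma lt_LM {f : FreeAlg K n} (hf : f ≠ 0) {v : Word n} (hv : v ∈ f.coeff.support)
    (hne : v ≠ LM o f) : o.lt v (LM o f) :=
  (LM_spec hf).2 v hv hne

lemma LM_eq_of_forall_lt {f : FreeAlg K n} {w : Word n} (hw : w ∈ f.coeff.support)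
    (h : ∀ v ∈ f.coeff.support, v ≠ w → o.lt v w) : LM o f = w := by
  have hf : f ≠ 0 := by rintro rfl; simp at hw
  by_contra hne
  exact o.wf.asymmetric _ _ (h _ (LM_mem_support hf) hne) (lt_LM hf hw (Ne.symm hne))

lemma LM_smul {c : K} (hc : c ≠ 0) (f : FreeAlg K n) : LM o (c • f) = LM o f := by
  simp only [LM, MonoidAlgebra.coeff_smul, Finsupp.support_smul_eq hc]

lemma coeff_mono_mul_mul_mono (w s v : Word n) (f : FreeAlg K n) :
    (mono w * f * mono s).coeff (w * v * s) = f.coeff v := by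
  simp [mono]

lemma support_mono_mul_mul_mono (w s : Word n) (f : FreeAlg K n) :
    (mono w * f * mono s).coeff.support = f.coeff.support.image (w * · * s) := by
  rw [mono, mono, MonoidAlgebra.support_coeff_mul_single_eq_image _ (by simp) (.all s),
    MonoidAlgebra.support_coeff_single_mul_eq_image _ (by simp) (.all w), Finset.image_image]
  rfl

lemma LM_mono_mul_mul_mono {f : FreeAlg K n} (hf : f ≠ 0) (w s : Word n) :
    LM o (mono w * f * mono s) = w * LM o f * s := by
  refine LM_eq_of_forall_lt ?_ fun v hv hne => ?_
  · rw [Finsupp.mem_support_iff, coeff_mono_mul_mul_mono]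
    exact Finsupp.mem_support_iff.mp (LM_mem_support hf)
  · rw [support_mono_mul_mul_mono] at hv
    obtain ⟨v', hv', rfl⟩ := Finset.mem_image.mp hv
    exact o.mul_compat _ _ _ _ (lt_LM hf hv' (by rintro rfl; exact hne rfl))

lemma lt_LM_of_mem_support_sub {f h : FreeAlg K n} (hf : f ≠ 0) (hLM : LM o h = LM o f)
    (hcoeff : h.coeff (LM o f) = f.coeff (LM o f)) {v : Word n}
    (hv : v ∈ (f - h).coeff.support) : o.lt v (LM o f) := by
  have hh : h ≠ 0 := by
    rintro rfl
    exact Finsupp.mem_support_iff.mp (LM_mem_support hf) hcoeff.symm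
  have hne : v ≠ LM o f := by
    rintro rfl
    simp [hcoeff] at hv
  rw [MonoidAlgebra.coeff_sub] at hv
  rcases Finset.mem_union.mp (Finsupp.support_sub hv) with hv | hv
  · exact lt_LM hf hv hne
  · exact hLM ▸ lt_LM hh hv (hLM ▸ hne)

end LeadingMonomial

section Homogeneous

variable (K) in
noncomputable abbrev degreeLE (wt : Fin n → ℕ) (p : ℕ) : Submodule K (FreeAlg K n) :=
  Submodule.span K (mono '' {w | wdeg wt w ≤ p})

variable (K) in
noncomputable abbrev homogeneousSubmodule (wt : Fin n → ℕ) (p : ℕ) : Submodule K (FreeAlg K n) :=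
  Submodule.span K (mono '' {w | wdeg wt w = p})

variable {wt : Fin n → ℕ}

lemma mem_degreeLE {p : ℕ} {f : FreeAlg K n} :
    f ∈ degreeLE K wt p ↔ ∀ w ∈ f.coeff.support, wdeg wt w ≤ p :=
  mem_span_mono_iff

lemma mem_homogeneousSubmodule {p : ℕ} {f : FreeAlg K n} :
    f ∈ homogeneousSubmodule K wt p ↔ IsHomogeneous wt f p :=
  mem_span_mono_iff

lemma degreeLE_mono (wt : Fin n → ℕ) : Monotone (degreeLE K wt) :=
  fun _ _ hpq => Submodule.span_mono (Set.image_mono fun _ h => le_trans h hpq)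

lemma homogeneousSubmodule_le_degreeLE (p : ℕ) :
    homogeneousSubmodule K wt p ≤ degreeLE K wt p :=
  Submodule.span_mono (Set.image_mono fun _ => le_of_eq)

lemma mono_mem_degreeLE {p : ℕ} {w : Word n} (h : wdeg wt w ≤ p) :
    (mono w : FreeAlg K n) ∈ degreeLE K wt p :=
  Submodule.subset_span ⟨w, h, rfl⟩

lemma mem_degreeLE_sup (f : FreeAlg K n) :
    f ∈ degreeLE K wt (f.coeff.support.sup (wdeg wt)) :=
  mem_degreeLE.mpr fun _ => Finset.le_sup

variable (wt) in
noncomputable def homogeneousComponent (p : ℕ) : FreeAlg K n →ₗ[K] FreeAlg K n where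
  toFun f := .ofCoeff (f.coeff.filter (wdeg wt · = p))
  map_add' f g := by simp [Finsupp.filter_add]
  map_smul' c f := by simp [Finsupp.filter_smul]

lemma LH_eq_homogeneousComponent (f : FreeAlg K n) :
    LH wt f = homogeneousComponent wt (f.coeff.support.sup (wdeg wt)) f :=
  rfl

lemma coeff_homogeneousComponent (p : ℕ) (f : FreeAlg K n) (w : Word n) :
    (homogeneousComponent wt p f).coeff w = if wdeg wt w = p then f.coeff w else 0 :=
  Finsupp.filter_apply ..

lemma homogeneousComponent_mem (p : ℕ) (f : FreeAlg K n) :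
    homogeneousComponent wt p f ∈ homogeneousSubmodule K wt p :=
  mem_homogeneousSubmodule.mpr fun _ hw => (Finset.mem_filter.mp hw).2

lemma homogeneousComponent_of_mem {p : ℕ} {f : FreeAlg K n}
    (hf : f ∈ homogeneousSubmodule K wt p) : homogeneousComponent wt p f = f := by
  ext w
  rw [coeff_homogeneousComponent]
  by_cases hw : w ∈ f.coeff.support
  · rw [if_pos (mem_homogeneousSubmodule.mp hf w hw)]
  · simp [Finsupp.notMem_support_iff.mp hw]

lemma homogeneousComponent_eq_zero_of_mem_degreeLE {p q : ℕ} {f : FreeAlg K n}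
    (hf : f ∈ degreeLE K wt q) (hqp : q < p) : homogeneousComponent wt p f = 0 := by
  ext w
  rw [coeff_homogeneousComponent]
  by_cases hw : w ∈ f.coeff.support
  · rw [if_neg (by have := mem_degreeLE.mp hf w hw; omega)]
    rfl
  · simp [Finsupp.notMem_support_iff.mp hw]

lemma homogeneousComponent_mono (p : ℕ) (w : Word n) :
    homogeneousComponent wt p (mono w : FreeAlg K n) = if wdeg wt w = p then mono w else 0 := by
  ext v
  rw [coeff_homogeneousComponent]
  by_cases hv : v = w <;> split_ifs <;> simp_all [mono, MonoidAlgebra.coeff_single]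

lemma sum_homogeneousComponent (f : FreeAlg K n) :
    ∑ p ∈ f.coeff.support.image (wdeg wt), homogeneousComponent wt p f = f := by
  ext w
  simp only [MonoidAlgebra.coeff_sum, Finset.sum_apply', coeff_homogeneousComponent]
  rw [Finset.sum_ite_eq _ _ fun _ => f.coeff w]
  by_cases hw : w ∈ f.coeff.support
  · rw [if_pos (Finset.mem_image_of_mem _ hw)]
  · simp [Finsupp.notMem_support_iff.mp hw]

lemma homogeneousComponent_mono_mul_mul_mono (w s : Word n) (p : ℕ) (f : FreeAlg K n) :
    homogeneousComponent wt (wdeg wt w + p + wdeg wt s) (mono w * f * mono s) =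
      mono w * homogeneousComponent wt p f * mono s := by
  induction f using MonoidAlgebra.induction_linear with
  | zero => simp
  | add f g hf hg => simp only [mul_add, add_mul, map_add, hf, hg]
  | single v c =>
    have hv : (MonoidAlgebra.single v c : FreeAlg K n) = c • mono v := by simp [mono]
    simp only [hv, mul_smul_comm, smul_mul_assoc, map_smul, ← mono_mul,
      homogeneousComponent_mono, wdeg_mul]
    split_ifs <;> first | omega | simp [mono_mul]

end Homogeneous

section Grobner

variable {wt : Fin n → ℕ} {o : MonOrder n}
  (hgr : ∀ u v : Word n, wdeg wt u < wdeg wt v → o.lt u v)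
include hgr

lemma wdeg_le_wdeg_LM {f : FreeAlg K n} {v : Word n} (hv : v ∈ f.coeff.support) :
    wdeg wt v ≤ wdeg wt (LM o f) := by
  have hf : f ≠ 0 := by rintro rfl; simp at hv
  by_contra! h
  exact o.wf.asymmetric _ _ (hgr _ _ h) (lt_LM hf hv (by rintro rfl; exact lt_irrefl _ h))

lemma mem_degreeLE_wdeg_LM (f : FreeAlg K n) : f ∈ degreeLE K wt (wdeg wt (LM o f)) :=
  mem_degreeLE.mpr fun _ => wdeg_le_wdeg_LM hgr

lemma LH_eq_homogeneousComponent_wdeg_LM {f : FreeAlg K n} (hf : f ≠ 0) :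
    LH wt f = homogeneousComponent wt (wdeg wt (LM o f)) f := by
  rw [LH_eq_homogeneousComponent, le_antisymm (Finset.sup_le fun _ => wdeg_le_wdeg_LM hgr)
    (Finset.le_sup (LM_mem_support hf))]

variable {𝒢 : Set (FreeAlg K n)} {I : TwoSidedIdeal (FreeAlg K n)} (hGB : IsGrobnerBasis o 𝒢 I)
include hGB

/-- `m` is the multiple `c • w g₀ s` of the element `g₀ ∈ 𝒢` whose leading monomial divides
`LM o g`. -/
lemma exists_reduction {g : FreeAlg K n} (hgI : g ∈ I) (hg : g ≠ 0) :
    ∃ m ∈ I, LM o m = LM o g ∧ m.coeff (LM o g) = g.coeff (LM o g) ∧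
      homogeneousComponent wt (wdeg wt (LM o g)) m ∈ TwoSidedIdeal.span (LH wt '' 𝒢) := by
  have hmem : (mono (LM o g) : FreeAlg K n) ∈ monIdeal K (LM o '' 𝒢) :=
    hGB.2 ▸ TwoSidedIdeal.subset_span ⟨LM o g, ⟨g, ⟨hgI, hg⟩, rfl⟩, rfl⟩
  obtain ⟨_, ⟨g₀, hg₀𝒢, rfl⟩, w, s, hdvd⟩ := exists_wdvd_of_mono_mem_monIdeal hmem
  obtain ⟨hg₀I, hg₀⟩ := hGB.1 hg₀𝒢
  have hc₀ : g₀.coeff (LM o g₀) ≠ 0 := Finsupp.mem_support_iff.mp (LM_mem_support hg₀)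
  set c := g.coeff (LM o g) / g₀.coeff (LM o g₀)
  have hc : c ≠ 0 := div_ne_zero (Finsupp.mem_support_iff.mp (LM_mem_support hg)) hc₀
  refine ⟨c • (mono w * g₀ * mono s), ?_, ?_, ?_, ?_⟩
  · rw [← smul_mul_assoc, ← smul_mul_assoc]
    exact I.mul_mem_right _ _ (I.mul_mem_left _ _ hg₀I)
  · rw [LM_smul hc, LM_mono_mul_mul_mono hg₀, hdvd]
  · rw [hdvd, MonoidAlgebra.coeff_smul, Finsupp.smul_apply, coeff_mono_mul_mul_mono, smul_eq_mul,
      div_mul_cancel₀ _ hc₀, hdvd]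
  · rw [hdvd, wdeg_mul, wdeg_mul, map_smul, homogeneousComponent_mono_mul_mul_mono,
      ← LH_eq_homogeneousComponent_wdeg_LM hgr hg₀, ← smul_mul_assoc, ← smul_mul_assoc]
    exact TwoSidedIdeal.mul_mem_right _ _ _
      (TwoSidedIdeal.mul_mem_left _ _ _ (TwoSidedIdeal.subset_span ⟨g₀, hg₀𝒢, rfl⟩))

theorem homogeneousComponent_mem_span_LH {g : FreeAlg K n} (hgI : g ∈ I) {p : ℕ}
    (hgp : g ∈ degreeLE K wt p) :
    homogeneousComponent wt p g ∈ TwoSidedIdeal.span (LH wt '' 𝒢) := by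
  generalize hu : LM o g = u
  induction u using o.wf.induction generalizing g with
  | h u ih =>
    subst hu
    rcases eq_or_ne g 0 with rfl | hg
    · rw [map_zero]
      exact zero_mem _
    have hLM_le : wdeg wt (LM o g) ≤ p := mem_degreeLE.mp hgp _ (LM_mem_support hg)
    rcases hLM_le.lt_or_eq with hlt | rfl
    · rw [homogeneousComponent_eq_zero_of_mem_degreeLE (mem_degreeLE_wdeg_LM hgr g) hlt]
      exact zero_mem _
    obtain ⟨m, hmI, hLM, hcoeff, hmJ⟩ := exists_reduction hgr hGB hgI hg
    have hrest : homogeneousComponent wt (wdeg wt (LM o g)) (g - m) ∈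
        TwoSidedIdeal.span (LH wt '' 𝒢) := by
      rcases eq_or_ne (g - m) 0 with h0 | h0
      · rw [h0, map_zero]
        exact zero_mem _
      refine ih _ (lt_LM_of_mem_support_sub hg hLM hcoeff (LM_mem_support h0))
        (I.sub_mem hgI hmI) (sub_mem hgp ?_) rfl
      simpa [hLM] using mem_degreeLE_wdeg_LM hgr m
    simpa using add_mem hmJ hrest

end Grobner

namespace AssocGradedData

variable {A B : Type} [Ring A] [Algebra K A] [Ring B] [Algebra K B] {F : ℕ → Submodule K A}
  (d : AssocGradedData K A B F)

lemma gr_congr {p q : ℕ} (h : p = q) {x : F p} {y : F q} (hxy : (x : A) = y) :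
    d.gr p x = d.gr q y := by
  subst h
  rw [Subtype.ext hxy]

lemma gr_eq_zero_of_lt {p q : ℕ} (x : F p) (hx : (x : A) ∈ F q) (hqp : q < p) :
    d.gr p x = 0 := by
  obtain ⟨r, rfl⟩ : ∃ r, p = r + 1 := ⟨p - 1, by omega⟩
  exact (d.gr_ker_succ r x).mpr (d.mono (Nat.le_of_lt_succ hqp) hx)

end AssocGradedData

section Symbol

variable {A B : Type} [Ring A] [Algebra K A] [Ring B] [Algebra K B] {wt : Fin n → ℕ}
  {π : FreeAlg K n →ₐ[K] A}
  (d : AssocGradedData K A B (fun p => (degreeLE K wt p).map π.toLinearMap))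

noncomputable def symbolHom : FreeAlg K n →ₐ[K] B :=
  MonoidAlgebra.lift K B (Word n)
    { toFun w := d.gr (wdeg wt w)
        ⟨π (mono w), Submodule.mem_map_of_mem (mono_mem_degreeLE le_rfl)⟩
      map_one' := by
        rw [← d.gr_one]
        exact d.gr_congr rfl (map_one π)
      map_mul' u v := by
        rw [d.gr_mul]
        exact d.gr_congr (wdeg_mul wt u v) (by simp [mono_mul]) }

lemma symbolHom_mono (w : Word n) :
    symbolHom d (mono w) =
      d.gr (wdeg wt w) ⟨π (mono w), Submodule.mem_map_of_mem (mono_mem_degreeLE le_rfl)⟩ := by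
  simp [symbolHom, mono]

lemma symbolHom_homogeneousComponent {p : ℕ} {f : FreeAlg K n} (hf : f ∈ degreeLE K wt p) :
    symbolHom d (homogeneousComponent wt p f) = d.gr p ⟨π f, Submodule.mem_map_of_mem hf⟩ := by
  induction hf using Submodule.span_induction with
  | mem x hx =>
    obtain ⟨w, hw, rfl⟩ := hx
    rw [homogeneousComponent_mono]
    split_ifs with h
    · exact (symbolHom_mono d w).trans (d.gr_congr h rfl)
    · rw [map_zero]
      exact (d.gr_eq_zero_of_lt _ (Submodule.mem_map_of_mem (mono_mem_degreeLE le_rfl))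
        (lt_of_le_of_ne hw h)).symm
  | zero =>
    rw [map_zero, map_zero, ← (d.gr p).map_zero]
    exact d.gr_congr rfl (map_zero π).symm
  | add x y _ _ hx hy =>
    rw [map_add, map_add, hx, hy, ← map_add]
    exact d.gr_congr rfl (map_add π x y).symm
  | smul c x _ hx =>
    rw [map_smul, map_smul, hx, ← map_smul]
    exact d.gr_congr rfl (map_smul π c x).symm

lemma range_gr_eq_map_symbolHom (p : ℕ) :
    LinearMap.range (d.gr p) = (homogeneousSubmodule K wt p).map (symbolHom d).toLinearMap := by
  apply le_antisymm
  · rintro _ ⟨⟨_, f, hf, rfl⟩, rfl⟩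
    exact ⟨_, homogeneousComponent_mem p f, symbolHom_homogeneousComponent d hf⟩
  · rintro _ ⟨f, hf, rfl⟩
    refine ⟨⟨π f, Submodule.mem_map_of_mem (homogeneousSubmodule_le_degreeLE p hf)⟩, ?_⟩
    rw [← symbolHom_homogeneousComponent d (homogeneousSubmodule_le_degreeLE p hf),
      homogeneousComponent_of_mem hf]
    rfl

lemma symbolHom_surjective : Function.Surjective (symbolHom d) := by
  intro b
  have hle : ⨆ p, LinearMap.range (d.gr p) ≤ LinearMap.range (symbolHom d).toLinearMap :=
    iSup_le fun p => (range_gr_eq_map_symbolHom d p).trans_le LinearMap.map_le_range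
  exact hle (d.internal.submodule_iSup_eq_top ▸ Submodule.mem_top)

lemma symbolHom_homogeneousComponent_eq_zero {f : FreeAlg K n} (hf : symbolHom d f = 0) :
    ∀ p ∈ f.coeff.support.image (wdeg wt), symbolHom d (homogeneousComponent wt p f) = 0 :=
  (iSupIndep_iff_finsetSum_eq_zero_imp_eq_zero _).mp d.internal.submodule_iSupIndep _ _
    (fun p _ => range_gr_eq_map_symbolHom d p ▸
      Submodule.mem_map_of_mem (homogeneousComponent_mem p f))
    (by rw [← map_sum, sum_homogeneousComponent, hf])

lemma exists_eq_homogeneousComponent_of_symbolHom_eq_zero {p : ℕ} {f : FreeAlg K n}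
    (hf : f ∈ homogeneousSubmodule K wt p) (h0 : symbolHom d f = 0) :
    ∃ g ∈ degreeLE K wt p, π g = 0 ∧ homogeneousComponent wt p g = f := by
  have hfp := homogeneousSubmodule_le_degreeLE p hf
  have hgr : d.gr p ⟨π f, Submodule.mem_map_of_mem hfp⟩ = 0 := by
    rw [← symbolHom_homogeneousComponent d hfp, homogeneousComponent_of_mem hf, h0]
  cases p with
  | zero => exact ⟨f, hfp, (d.gr_ker_zero _).mp hgr, homogeneousComponent_of_mem hf⟩
  | succ q =>
    obtain ⟨f', hf', hπ⟩ := (d.gr_ker_succ q _).mp hgr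
    refine ⟨f - f', sub_mem hfp (degreeLE_mono wt q.le_succ hf'), ?_, ?_⟩
    · simpa [sub_eq_zero] using hπ.symm
    · rw [map_sub, homogeneousComponent_of_mem hf,
        homogeneousComponent_eq_zero_of_mem_degreeLE hf' q.lt_succ_self, sub_zero]

theorem symbolHom_eq_zero_iff {o : MonOrder n}
    (hgr : ∀ u v : Word n, wdeg wt u < wdeg wt v → o.lt u v) {𝒢 : Set (FreeAlg K n)}
    {I : TwoSidedIdeal (FreeAlg K n)} (hGB : IsGrobnerBasis o 𝒢 I) (hπ : ∀ f, π f = 0 ↔ f ∈ I)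
    (f : FreeAlg K n) : symbolHom d f = 0 ↔ f ∈ TwoSidedIdeal.span (LH wt '' 𝒢) := by
  constructor
  · intro hf
    rw [← sum_homogeneousComponent (wt := wt) f]
    refine sum_mem fun p hp => ?_
    obtain ⟨g, hgp, hg, hgf⟩ := exists_eq_homogeneousComponent_of_symbolHom_eq_zero d
      (homogeneousComponent_mem p f) (symbolHom_homogeneousComponent_eq_zero d hf p hp)
    rw [← hgf]
    exact homogeneousComponent_mem_span_LH hgr hGB ((hπ g).mp hg) hgp
  · suffices TwoSidedIdeal.span (LH wt '' 𝒢) ≤ TwoSidedIdeal.ker (symbolHom d) from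
      fun hf => (TwoSidedIdeal.mem_ker _).mp (this hf)
    refine TwoSidedIdeal.span_le.mpr ?_
    rintro _ ⟨g, hg, rfl⟩
    rw [SetLike.mem_coe, TwoSidedIdeal.mem_ker, LH_eq_homogeneousComponent,
      symbolHom_homogeneousComponent d (mem_degreeLE_sup g), ← (d.gr _).map_zero]
    exact d.gr_congr rfl ((hπ g).mpr (hGB.1 hg).1)

end Symbol

theorem assocGraded_iso_LH_quotient_general {K : Type} [Field K] {n : ℕ}
    (wt : Fin n → ℕ) (o : MonOrder n)
    (hgr : ∀ u v : Word n, wdeg wt u < wdeg wt v → o.lt u v)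
    (𝒢 : Set (FreeAlg K n))
    (I : TwoSidedIdeal (FreeAlg K n))
    (hGB : IsGrobnerBasis o 𝒢 I)
    (B : Type) [Ring B] [Algebra K B]
    (d : AssocGradedData K I.ringCon.Quotient B
      (fun p => Submodule.map (quotAlgHom (K := K) I.ringCon).toLinearMap
        (Submodule.span K (mono '' {w : Word n | wdeg wt w ≤ p})))) :
    ∃ e : B ≃ₐ[K] (TwoSidedIdeal.span (LH wt '' 𝒢)).ringCon.Quotient,
      ∀ p : ℕ,
        Submodule.map e.toLinearMap (LinearMap.range (d.gr p)) =
          Submodule.map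
            (quotAlgHom (K := K) (TwoSidedIdeal.span (LH wt '' 𝒢)).ringCon).toLinearMap
            (Submodule.span K (mono '' {w : Word n | wdeg wt w = p})) := by
  set e := quotientAlgEquivOfSurjective (symbolHom d) (symbolHom_surjective d) _
    (symbolHom_eq_zero_iff d hgr hGB (quotAlgHom_eq_zero_iff I))
  refine ⟨e.symm, fun p => ?_⟩
  rw [range_gr_eq_map_symbolHom d p, ← Submodule.map_comp]
  congr 1
  exact LinearMap.ext fun f =>
    e.symm_apply_eq.mpr (quotientAlgEquivOfSurjective_quotAlgHom (symbolHom d) _ _ _ f).symm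

/-- Let `≺_gr` be an `ℕ`-graded monomial ordering for a weight `ℕ`-grading of `K⟨X⟩` and
`𝒢` a finite Gröbner basis of `I = ⟨𝒢⟩` w.r.t. `≺_gr`.  Then the associated graded algebra
`G(A)` of `A = K⟨X⟩/I` (for the filtration induced by the grading filtration of `K⟨X⟩`) is
isomorphic, as an `ℕ`-graded `K`-algebra, to `K⟨X⟩/⟨LH(𝒢)⟩`. -/
theorem assocGraded_iso_LH_quotient {K : Type} [Field K] {n : ℕ}
    (wt : Fin n → ℕ) (hwt : ∀ i, 0 < wt i) (o : MonOrder n)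
    (hgr : ∀ u v : Word n, wdeg wt u < wdeg wt v → o.lt u v)
    (𝒢 : Set (FreeAlg K n)) (hfin : 𝒢.Finite)
    (I : TwoSidedIdeal (FreeAlg K n)) (hI : I = TwoSidedIdeal.span 𝒢)
    (hGB : IsGrobnerBasis o 𝒢 I)
    (B : Type) [Ring B] [Algebra K B]
    (d : AssocGradedData K I.ringCon.Quotient B
      (fun p => Submodule.map (quotAlgHom (K := K) I.ringCon).toLinearMap
        (Submodule.span K (mono '' {w : Word n | wdeg wt w ≤ p})))) :
    ∃ e : B ≃ₐ[K] (TwoSidedIdeal.span (LH wt '' 𝒢)).ringCon.Quotient,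
      ∀ p : ℕ,
        Submodule.map e.toLinearMap (LinearMap.range (d.gr p)) =
          Submodule.map
            (quotAlgHom (K := K) (TwoSidedIdeal.span (LH wt '' 𝒢)).ringCon).toLinearMap
            (Submodule.span K (mono '' {w : Word n | wdeg wt w = p})) :=
  assocGraded_iso_LH_quotient_general wt o hgr 𝒢 I hGB B d
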